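/- arXiv:1810.03497 — 2 statements merged into one kernel-verified Lean document; each statement's English description precedes it below -/
import Mathlib

section
/- Let ζ ∈ ℂ with ζ ≠ 0, |ζ| ≠ 1, and let z ∈ ℝ with |z| > 1 + |ζ|. Then 1 + |ζ|² − z² < −2|ζ| < 0, the discriminant (1 + |ζ|² − z²)² − 4|ζ|² is strictly positive, and for λ₁, λ₂ as defined by the quadratic formula with the + and − branches of the real square root respectively, one has |λ₂| < 1 < |λ₁|. -/
/-! With `r = ‖ζ‖` and `a = 1 + r² - z²`, both candidates are real numbers `μ` divided by
`2 * conj ζ`, so their moduli are `|μ| / (2r)`. The hypothesis on `z` gives `a < -2r`, hence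
`0 < -a - √(a² - 4r²) < 2r < -a + √(a² - 4r²)`. -/

open ComplexConjugate

lemma one_add_sq_sub_sq_lt_neg_two_mul {r z : ℝ} (hr : 0 ≤ r) (hz : 1 + r < |z|) :
    1 + r ^ 2 - z ^ 2 < -(2 * r) := by
  have : (1 + r) ^ 2 < |z| ^ 2 := by gcongr
  rw [sq_abs] at this
  linarith

lemma sq_sub_four_mul_sq_pos {a r : ℝ} (hr : 0 ≤ r) (ha : a < -(2 * r)) :
    0 < a ^ 2 - 4 * r ^ 2 := by
  nlinarith

lemma abs_neg_sub_sqrt_discrim_lt {a r : ℝ} (hr : 0 < r) (ha : a < -(2 * r)) :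
    |-a - √(a ^ 2 - 4 * r ^ 2)| < 2 * r := by
  have hs := Real.sq_sqrt (sq_sub_four_mul_sq_pos hr.le ha).le
  have hs0 := Real.sqrt_nonneg (a ^ 2 - 4 * r ^ 2)
  -- `-a - 2r < s` follows by squaring, since `(a + 2r)² < a² - 4r²` reduces to `a < -2r`.
  have hlt : -a - 2 * r < √(a ^ 2 - 4 * r ^ 2) := by nlinarith
  have hpos : √(a ^ 2 - 4 * r ^ 2) < -a := by nlinarith
  rw [abs_lt]
  constructor <;> linarith

lemma two_mul_lt_neg_add_sqrt_discrim {a r : ℝ} (hr : 0 < r) (ha : a < -(2 * r)) :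
    2 * r < -a + √(a ^ 2 - 4 * r ^ 2) := by
  have hpos := Real.sqrt_pos.mpr (sq_sub_four_mul_sq_pos hr.le ha)
  linarith

lemma norm_ofReal_div_two_mul_conj (x : ℝ) (ζ : ℂ) :
    ‖(x : ℂ) / (2 * conj ζ)‖ = |x| / (2 * ‖ζ‖) := by
  rw [norm_div, norm_mul, Complex.norm_conj, Complex.norm_two, Complex.norm_real,
    Real.norm_eq_abs]

theorem stmt_7_general (ζ : ℂ) (z : ℝ) (hζ0 : ζ ≠ 0)
    (hz : 1 + ‖ζ‖ < |z|) :
    (1 + ‖ζ‖ ^ 2 - z ^ 2 < -(2 * ‖ζ‖)) ∧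
    (-(2 * ‖ζ‖) < 0) ∧
    (0 < (1 + ‖ζ‖ ^ 2 - z ^ 2) ^ 2 - 4 * ‖ζ‖ ^ 2) ∧
    ‖(((-(1 + ‖ζ‖ ^ 2 - z ^ 2) -
        Real.sqrt ((1 + ‖ζ‖ ^ 2 - z ^ 2) ^ 2 - 4 * ‖ζ‖ ^ 2) : ℝ) : ℂ) /
        (2 * (starRingEnd ℂ) ζ))‖ < 1 ∧
    1 < ‖(((-(1 + ‖ζ‖ ^ 2 - z ^ 2) +
        Real.sqrt ((1 + ‖ζ‖ ^ 2 - z ^ 2) ^ 2 - 4 * ‖ζ‖ ^ 2) : ℝ) : ℂ) /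
        (2 * (starRingEnd ℂ) ζ))‖ := by
  have hr : 0 < ‖ζ‖ := norm_pos_iff.mpr hζ0
  have h2r : 0 < 2 * ‖ζ‖ := by positivity
  have ha := one_add_sq_sub_sq_lt_neg_two_mul hr.le hz
  refine ⟨ha, by linarith, sq_sub_four_mul_sq_pos hr.le ha, ?_, ?_⟩
  · rw [norm_ofReal_div_two_mul_conj, div_lt_one h2r]
    exact abs_neg_sub_sqrt_discrim_lt hr ha
  · rw [norm_ofReal_div_two_mul_conj, one_lt_div h2r]
    exact (two_mul_lt_neg_add_sqrt_discrim hr ha).trans_le (le_abs_self _)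

theorem stmt_7 (ζ : ℂ) (z : ℝ) (hζ0 : ζ ≠ 0) (hζ1 : ‖ζ‖ ≠ 1)
    (hz : 1 + ‖ζ‖ < |z|) :
    (1 + ‖ζ‖ ^ 2 - z ^ 2 < -(2 * ‖ζ‖)) ∧
    (-(2 * ‖ζ‖) < 0) ∧
    (0 < (1 + ‖ζ‖ ^ 2 - z ^ 2) ^ 2 - 4 * ‖ζ‖ ^ 2) ∧
    ‖(((-(1 + ‖ζ‖ ^ 2 - z ^ 2) -
        Real.sqrt ((1 + ‖ζ‖ ^ 2 - z ^ 2) ^ 2 - 4 * ‖ζ‖ ^ 2) : ℝ) : ℂ) /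
        (2 * (starRingEnd ℂ) ζ))‖ < 1 ∧
    1 < ‖(((-(1 + ‖ζ‖ ^ 2 - z ^ 2) +
        Real.sqrt ((1 + ‖ζ‖ ^ 2 - z ^ 2) ^ 2 - 4 * ‖ζ‖ ^ 2) : ℝ) : ℂ) /
        (2 * (starRingEnd ℂ) ζ))‖ :=
  stmt_7_general ζ z hζ0 hz
end

section
/- Error kernels form an ideal-like class stable under Neumann series: suppose E: ℝ² × ℝ² → ℂ is measurable and satisfies |E(x,y)| ≤ (a/4)² e^{−γ (|x₁−y₁| + |x₂−y₂|)} for all x, y ∈ ℝ², where 0 < 2a < γ. Then for every l ≥ 1 the kernel E_l of the l-th power of the integral operator with kernel E satisfies |E_l(x,y)| ≤ 2^{−2l} a² e^{−(γ−a)(|x₁−y₁|+|x₂−y₂|)}. Consequently the series Σ_{l≥1} E_l(x,y) converges absolutely and defines a kernel Ẽ with |Ẽ(x,y)| ≤ C a² e^{−(γ−a)(|x₁−y₁|+|x₂−y₂|)} for a constant C depending only on the geometric series; Ẽ is the kernel of I − (I − E)^{−1} on L²(ℝ²). -/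
/-!
Writing `β = γ - a`, the factor `e^{-γ d(z,y)}` of `E` splits as `e^{-β d(z,y)} e^{-a d(z,y)}`.
By the triangle inequality for the `ℓ¹` distance `d`, `e^{-β d(x,z)} e^{-β d(z,y)} ≤ e^{-β d(x,y)}`,
and the leftover `e^{-a d(z,y)}` integrates to `(2/a)²`. So composing a kernel bounded by
`A e^{-β d}` with `E` gives a kernel bounded by `A (a/4)² (2/a)² e^{-β d} = (A/4) e^{-β d}`:
each power of `E` gains a factor `1/4`, and the Neumann series is dominated by a geometric series.
-/

open MeasureTheory Real Set

lemma integrable_exp_neg_mul_abs {c : ℝ} (hc : 0 < c) :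
    Integrable fun t : ℝ => exp (-c * |t|) := by
  rw [← integrableOn_univ, ← Iic_union_Ioi (a := 0)]
  refine IntegrableOn.union ?_ ?_
  · refine (integrableOn_exp_mul_Iic hc 0).congr_fun (fun t ht => ?_) measurableSet_Iic
    simp [abs_of_nonpos (mem_Iic.1 ht)]
  · refine (integrableOn_exp_mul_Ioi (neg_neg_of_pos hc) 0).congr_fun (fun t ht => ?_)
      measurableSet_Ioi
    simp [abs_of_pos (mem_Ioi.1 ht)]

lemma integral_exp_neg_mul_abs {c : ℝ} (hc : 0 < c) :
    ∫ t : ℝ, exp (-c * |t|) = 2 / c := by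
  rw [integral_comp_abs (f := fun t => exp (-c * t)), integral_exp_mul_Ioi (neg_neg_of_pos hc)]
  field_simp
  simp

def l1dist (x y : ℝ × ℝ) : ℝ := |x.1 - y.1| + |x.2 - y.2|

lemma l1dist_triangle (x y z : ℝ × ℝ) : l1dist x z ≤ l1dist x y + l1dist y z := by
  unfold l1dist
  linarith [abs_sub_le x.1 y.1 z.1, abs_sub_le x.2 y.2 z.2]

lemma exp_neg_mul_l1dist (c : ℝ) (x y : ℝ × ℝ) :
    exp (-c * l1dist x y) = exp (-c * |x.1 - y.1|) * exp (-c * |x.2 - y.2|) := by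
  rw [l1dist, mul_add, exp_add]

lemma integrable_exp_neg_mul_l1dist {c : ℝ} (hc : 0 < c) (y : ℝ × ℝ) :
    Integrable fun z : ℝ × ℝ => exp (-c * l1dist z y) := by
  simp_rw [exp_neg_mul_l1dist, Measure.volume_eq_prod]
  exact ((integrable_exp_neg_mul_abs hc).comp_sub_right y.1).mul_prod
    ((integrable_exp_neg_mul_abs hc).comp_sub_right y.2)

lemma integral_exp_neg_mul_l1dist {c : ℝ} (hc : 0 < c) (y : ℝ × ℝ) :
    ∫ z : ℝ × ℝ, exp (-c * l1dist z y) = (2 / c) ^ 2 := by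
  simp_rw [exp_neg_mul_l1dist, Measure.volume_eq_prod]
  rw [integral_prod_mul (fun t => exp (-c * |t - y.1|)) (fun t => exp (-c * |t - y.2|)),
    integral_sub_right_eq_self (fun t => exp (-c * |t|)),
    integral_sub_right_eq_self (fun t => exp (-c * |t|)), integral_exp_neg_mul_abs hc, sq]

lemma norm_integral_mul_le_of_exp_bound {R : Type*} [NormedRing R] [NormedSpace ℝ R]
    {K L : ℝ × ℝ → R} {x y : ℝ × ℝ} {A B β a : ℝ} (hβ : 0 ≤ β) (ha : 0 < a)
    (hK : ∀ z, ‖K z‖ ≤ A * exp (-β * l1dist x z))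
    (hL : ∀ z, ‖L z‖ ≤ B * exp (-(β + a) * l1dist z y)) :
    ‖∫ z, K z * L z‖ ≤ A * B * (2 / a) ^ 2 * exp (-β * l1dist x y) := by
  have hA : 0 ≤ A := nonneg_of_mul_nonneg_left ((norm_nonneg _).trans (hK x)) (exp_pos _)
  have hB : 0 ≤ B := nonneg_of_mul_nonneg_left ((norm_nonneg _).trans (hL y)) (exp_pos _)
  have hpt : ∀ z, ‖K z * L z‖ ≤ A * B * exp (-β * l1dist x y) * exp (-a * l1dist z y) := by
    intro z
    calc ‖K z * L z‖ ≤ ‖K z‖ * ‖L z‖ := norm_mul_le _ _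
      _ ≤ (A * exp (-β * l1dist x z)) * (B * exp (-(β + a) * l1dist z y)) :=
          mul_le_mul (hK z) (hL z) (norm_nonneg _) (by positivity)
      _ = A * B * exp (-β * (l1dist x z + l1dist z y) + -a * l1dist z y) := by
          rw [mul_mul_mul_comm, ← exp_add]; ring_nf
      _ ≤ A * B * exp (-β * l1dist x y + -a * l1dist z y) := by
          refine mul_le_mul_of_nonneg_left (exp_le_exp.2 ?_) (by positivity)
          linarith [mul_le_mul_of_nonneg_left (l1dist_triangle x z y) hβ]
      _ = A * B * exp (-β * l1dist x y) * exp (-a * l1dist z y) := by rw [exp_add]; ring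
  calc ‖∫ z, K z * L z‖ ≤ ∫ z, ‖K z * L z‖ := norm_integral_le_integral_norm _
    _ ≤ ∫ z, A * B * exp (-β * l1dist x y) * exp (-a * l1dist z y) :=
        integral_mono_of_nonneg (.of_forall fun _ => norm_nonneg _)
          ((integrable_exp_neg_mul_l1dist ha y).const_mul _) (.of_forall hpt)
    _ = A * B * (2 / a) ^ 2 * exp (-β * l1dist x y) := by
        rw [integral_const_mul, integral_exp_neg_mul_l1dist ha]; ring

lemma norm_iteratedKernel_le {R : Type*} [NormedRing R] [NormedSpace ℝ R] {a γ : ℝ}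
    (ha : 0 < a) (hγ : a ≤ γ) {E : ℝ × ℝ → ℝ × ℝ → R}
    (hE : ∀ x y, ‖E x y‖ ≤ (a / 4) ^ 2 * exp (-γ * l1dist x y))
    {El : ℕ → ℝ × ℝ → ℝ × ℝ → R} (hEl1 : El 1 = E)
    (hEls : ∀ l, 1 ≤ l → ∀ x y, El (l + 1) x y = ∫ z, El l x z * E z y) :
    ∀ l, 1 ≤ l → ∀ x y, ‖El l x y‖ ≤ 4⁻¹ ^ l * a ^ 2 * exp (-(γ - a) * l1dist x y) := by
  have hE' : ∀ x y, ‖E x y‖ ≤ (a / 4) ^ 2 * exp (-((γ - a) + a) * l1dist x y) := by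
    simpa only [sub_add_cancel] using hE
  intro l hl
  induction l, hl using Nat.le_induction with
  | base =>
    intro x y
    rw [hEl1]
    refine (hE x y).trans (mul_le_mul (by nlinarith [sq_nonneg a]) ?_ (exp_pos _).le (by positivity))
    gcongr
    · exact add_nonneg (abs_nonneg _) (abs_nonneg _)
    · linarith
  | succ l hl ih =>
    intro x y
    rw [hEls l hl x y]
    refine (norm_integral_mul_le_of_exp_bound (by linarith) ha (ih x) (hE' · y)).trans_eq ?_
    field_simp
    ring

theorem stmt_15_general (a γ : ℝ) (ha : 0 < a) (hγ : 2 * a < γ)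
    (E : (ℝ × ℝ) → (ℝ × ℝ) → ℂ)
    (hE : ∀ x y : ℝ × ℝ, ‖E x y‖ ≤
      (a / 4) ^ 2 * Real.exp (-γ * (|x.1 - y.1| + |x.2 - y.2|)))
    (El : ℕ → (ℝ × ℝ) → (ℝ × ℝ) → ℂ) (hEl1 : El 1 = E)
    (hEls : ∀ l, 1 ≤ l → ∀ x y : ℝ × ℝ, El (l + 1) x y = ∫ z : ℝ × ℝ, El l x z * E z y) :
    (∀ l, 1 ≤ l → ∀ x y : ℝ × ℝ, ‖El l x y‖ ≤
      (2 : ℝ)⁻¹ ^ (2 * l) * a ^ 2 * Real.exp (-(γ - a) * (|x.1 - y.1| + |x.2 - y.2|))) ∧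
    (∀ x y : ℝ × ℝ, Summable fun l : ℕ => ‖El (l + 1) x y‖) ∧
    (∃ C : ℝ, 0 < C ∧ ∀ x y : ℝ × ℝ,
      ‖∑' l : ℕ, El (l + 1) x y‖ ≤
        C * a ^ 2 * Real.exp (-(γ - a) * (|x.1 - y.1| + |x.2 - y.2|))) := by
  have key := norm_iteratedKernel_le ha (by linarith) hE hEl1 hEls
  have hshift : ∀ l x y,
      ‖El (l + 1) x y‖ ≤ 4⁻¹ * a ^ 2 * exp (-(γ - a) * l1dist x y) * 4⁻¹ ^ l := fun l x y =>
    (key (l + 1) (Nat.le_add_left 1 l) x y).trans_eq (by ring)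
  have hgeom := fun x y => (hasSum_geometric_of_lt_one (r := (4 : ℝ)⁻¹) (by norm_num)
    (by norm_num)).mul_left (4⁻¹ * a ^ 2 * exp (-(γ - a) * l1dist x y))
  refine ⟨fun l hl x y => ?_, fun x y => ?_, 3⁻¹, by norm_num, fun x y => ?_⟩
  · rw [pow_mul, show (2 : ℝ)⁻¹ ^ 2 = 4⁻¹ by norm_num]
    exact key l hl x y
  · exact .of_nonneg_of_le (fun _ => norm_nonneg _) (hshift · x y) (hgeom x y).summable
  · exact (tsum_of_norm_bounded (hgeom x y) (hshift · x y)).trans_eq (by rw [l1dist]; ring)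

theorem stmt_15 (a γ : ℝ) (ha : 0 < a) (hγ : 2 * a < γ)
    (E : (ℝ × ℝ) → (ℝ × ℝ) → ℂ) (hmeas : Measurable fun p : (ℝ × ℝ) × (ℝ × ℝ) => E p.1 p.2)
    (hE : ∀ x y : ℝ × ℝ, ‖E x y‖ ≤
      (a / 4) ^ 2 * Real.exp (-γ * (|x.1 - y.1| + |x.2 - y.2|)))
    (El : ℕ → (ℝ × ℝ) → (ℝ × ℝ) → ℂ) (hEl1 : El 1 = E)
    (hEls : ∀ l, 1 ≤ l → ∀ x y : ℝ × ℝ, El (l + 1) x y = ∫ z : ℝ × ℝ, El l x z * E z y) :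
    (∀ l, 1 ≤ l → ∀ x y : ℝ × ℝ, ‖El l x y‖ ≤
      (2 : ℝ)⁻¹ ^ (2 * l) * a ^ 2 * Real.exp (-(γ - a) * (|x.1 - y.1| + |x.2 - y.2|))) ∧
    (∀ x y : ℝ × ℝ, Summable fun l : ℕ => ‖El (l + 1) x y‖) ∧
    (∃ C : ℝ, 0 < C ∧ ∀ x y : ℝ × ℝ,
      ‖∑' l : ℕ, El (l + 1) x y‖ ≤
        C * a ^ 2 * Real.exp (-(γ - a) * (|x.1 - y.1| + |x.2 - y.2|))) :=
  stmt_15_general a γ ha hγ E hE El hEl1 hEls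
end
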